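/- Let B be a complete ccc Boolean algebra and U an ultrafilter on B. Then U is a coherent selective ultrafilter if and only if for every pair of partitions P, Q of B with P ⪯ Q, either U ∩ Q ≠ ∅, or there is a set X ⊆ P such that ⨆X ∈ U and for every q ∈ Q the set {p ∈ X : p ⊓ q ≠ ⊥} has at most one element. -/

import Mathlib

open Cardinal Filter

variable {B : Type*}

/-- A partition of a Boolean algebra: a set of nonzero, pairwise disjoint
elements that is maximal (every nonzero element meets some member). -/
def IsBPartition [BooleanAlgebra B] (P : Set B) : Prop :=
  ⊥ ∉ P ∧ (P.Pairwise fun a b => a ⊓ b = ⊥) ∧ ∀ b : B, b ≠ ⊥ → ∃ p ∈ P, b ⊓ p ≠ ⊥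

/-- `P` refines `Q`: every member of `P` lies below some member of `Q`. -/
def BRefines [BooleanAlgebra B] (P Q : Set B) : Prop :=
  ∀ p ∈ P, ∃ q ∈ Q, p ≤ q

/-- A filter on a Boolean algebra. -/
def IsBFilter [BooleanAlgebra B] (F : Set B) : Prop :=
  ⊥ ∉ F ∧ ⊤ ∈ F ∧ (∀ a ∈ F, ∀ b : B, a ≤ b → b ∈ F) ∧ ∀ a ∈ F, ∀ b ∈ F, a ⊓ b ∈ F

/-- An ultrafilter on a Boolean algebra. -/
def IsBUltrafilter [BooleanAlgebra B] (U : Set B) : Prop :=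
  IsBFilter U ∧ ∀ b : B, b ∈ U ∨ bᶜ ∈ U

/-- The countable chain condition: every set of pairwise disjoint
nonzero elements is countable. -/
def BCCC (B : Type*) [BooleanAlgebra B] : Prop :=
  ∀ S : Set B, ⊥ ∉ S → (S.Pairwise fun a b => a ⊓ b = ⊥) → S.Countable

/-- A filter on ℕ, presented as a family of subsets of ℕ. -/
def IsNFilter (V : Set (Set ℕ)) : Prop :=
  ∅ ∉ V ∧ Set.univ ∈ V ∧ (∀ A ∈ V, ∀ C : Set ℕ, A ⊆ C → C ∈ V) ∧
    ∀ A ∈ V, ∀ C ∈ V, A ∩ C ∈ V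

/-- An ultrafilter on ℕ, presented as a family of subsets of ℕ. -/
def IsNUltrafilter (V : Set (Set ℕ)) : Prop :=
  IsNFilter V ∧ ∀ A : Set ℕ, A ∈ V ∨ Aᶜ ∈ V

/-- A P-point on ℕ: an ultrafilter such that for every partition of ℕ into
sets not in the ultrafilter there is a member meeting each piece finitely. -/
def IsPPointFamily (V : Set (Set ℕ)) : Prop :=
  IsNUltrafilter V ∧ ∀ A : ℕ → Set ℕ, (Pairwise fun m n => A m ∩ A n = ∅) →
    (⋃ n, A n) = Set.univ → (∀ n, A n ∉ V) → ∃ S ∈ V, ∀ n, (S ∩ A n).Finite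

/-- A selective ultrafilter on ℕ: for every partition of ℕ into sets not in
the ultrafilter there is a member meeting each piece in at most one point. -/
def IsSelectiveFamily (V : Set (Set ℕ)) : Prop :=
  IsNUltrafilter V ∧ ∀ A : ℕ → Set ℕ, (Pairwise fun m n => A m ∩ A n = ∅) →
    (⋃ n, A n) = Set.univ → (∀ n, A n ∉ V) → ∃ S ∈ V, ∀ n, (S ∩ A n).Subsingleton

/-- A coherent P-ultrafilter: an ultrafilter whose trace on every countably
infinite partition is a P-point on ℕ. -/
def IsCoherentPUltrafilter [CompleteBooleanAlgebra B] (U : Set B) : Prop :=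
  IsBUltrafilter U ∧ ∀ p : ℕ → B, Function.Injective p → IsBPartition (Set.range p) →
    IsPPointFamily {A : Set ℕ | (⨆ n ∈ A, p n) ∈ U}

/-- A coherent selective ultrafilter: an ultrafilter whose trace on every
countably infinite partition is a selective ultrafilter on ℕ. -/
def IsCoherentSelectiveUltrafilter [CompleteBooleanAlgebra B] (U : Set B) : Prop :=
  IsBUltrafilter U ∧ ∀ p : ℕ → B, Function.Injective p → IsBPartition (Set.range p) →
    IsSelectiveFamily {A : Set ℕ | (⨆ n ∈ A, p n) ∈ U}

/-- Atomless: every nonzero element properly contains a nonzero element. -/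
def BAtomless (B : Type*) [BooleanAlgebra B] : Prop :=
  ∀ b : B, b ≠ ⊥ → ∃ c : B, c ≠ ⊥ ∧ c < b

/-!
If `P ∩ U ≠ ∅` a singleton `X` works; otherwise `P` is infinite, and the chain condition lets us
enumerate it as `P = {e n}`. Then the trace of `U` is an ultrafilter on `ℕ`, and a coarser
partition `Q` with `Q ∩ U = ∅` becomes the partition of `ℕ` into the fibres of a map `c : ℕ → Q`
choosing for each `e n` the piece of `Q` above it; a selector for these fibres is exactly a set
`X ⊆ P` in `U` meeting each member of `Q` at most once. Conversely a partition `{A n}` of `ℕ` into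
sets outside the trace is coarsened from `{p n}` by `q n = ⨆ m ∈ A n, p m`, and a set `X` as above
for this pair pulls back to a selector.
-/

open Function

theorem IsBPartition.ne_bot [BooleanAlgebra B] {P : Set B} (hP : IsBPartition P) {p : B}
    (hp : p ∈ P) : p ≠ ⊥ :=
  fun h => hP.1 (h ▸ hp)

theorem IsBPartition.pairwise_disjoint [BooleanAlgebra B] {ι : Type*} {p : ι → B}
    (hP : IsBPartition (Set.range p)) (hinj : Injective p) :
    Pairwise (Disjoint on p) :=
  fun m n h => disjoint_iff.2 <| hP.2.1 (Set.mem_range_self m) (Set.mem_range_self n) (hinj.ne h)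

theorem IsBPartition.eq_of_le_of_inf_ne_bot [BooleanAlgebra B] {Q : Set B}
    (hQ : IsBPartition Q) {p q q' : B} (hq : q ∈ Q) (hq' : q' ∈ Q) (hpq' : p ≤ q')
    (hpq : p ⊓ q ≠ ⊥) : q' = q := by
  by_contra hne
  exact hpq (le_bot_iff.1 (hQ.2.1 hq' hq hne ▸ inf_le_inf_right q hpq'))

theorem IsBPartition.sSup_eq_top [CompleteBooleanAlgebra B] {P : Set B} (hP : IsBPartition P) :
    sSup P = ⊤ := by
  by_contra hne
  obtain ⟨p, hp, hmeet⟩ := hP.2.2 _ (mt compl_eq_bot.1 hne)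
  exact hmeet (disjoint_iff.1 (disjoint_compl_left.mono_right (le_sSup hp)))

theorem IsBPartition.biSup_image [CompleteBooleanAlgebra B] {ι κ : Type*} {p : ι → B}
    (hP : IsBPartition (Set.range p)) (hp : Pairwise (Disjoint on p)) {A : κ → Set ι}
    (hA : Pairwise (Disjoint on A)) (hcover : ⋃ n, A n = Set.univ) :
    IsBPartition ((fun n => ⨆ m ∈ A n, p m) '' {n | (A n).Nonempty}) := by
  refine ⟨?_, ?_, fun b hb => ?_⟩
  · rintro ⟨n, ⟨m, hm⟩, hbot⟩
    exact hP.ne_bot (Set.mem_range_self m) (le_bot_iff.1 (hbot ▸ le_biSup p hm))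
  · rintro _ ⟨n, -, rfl⟩ _ ⟨n', -, rfl⟩ hne
    rw [← biSup_inter_of_pairwise_disjoint hp, (hA fun h => hne (by rw [h])).inter_eq]
    simp
  · obtain ⟨_, ⟨m, rfl⟩, hbm⟩ := hP.2.2 b hb
    obtain ⟨n, hn⟩ := Set.mem_iUnion.1 (hcover ▸ Set.mem_univ m)
    exact ⟨_, ⟨n, ⟨m, hn⟩, rfl⟩, fun h => hbm (le_bot_iff.1 (h ▸ inf_le_inf_left b (le_biSup p hn)))⟩

theorem bRefines_biSup_image [CompleteBooleanAlgebra B] {ι κ : Type*} (p : ι → B)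
    {A : κ → Set ι} (hcover : ⋃ n, A n = Set.univ) :
    BRefines (Set.range p) ((fun n => ⨆ m ∈ A n, p m) '' {n | (A n).Nonempty}) := by
  rintro _ ⟨m, rfl⟩
  obtain ⟨n, hn⟩ := Set.mem_iUnion.1 (hcover ▸ Set.mem_univ m)
  exact ⟨_, ⟨n, ⟨m, hn⟩, rfl⟩, le_biSup p hn⟩

theorem IsBUltrafilter.mem_or_mem_of_sup_mem [BooleanAlgebra B] {U : Set B}
    (hU : IsBUltrafilter U) {a b : B} (h : a ⊔ b ∈ U) : a ∈ U ∨ b ∈ U := by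
  by_contra! hc
  have hab : aᶜ ⊓ bᶜ ∈ U :=
    hU.1.2.2.2 _ ((hU.2 a).resolve_left hc.1) _ ((hU.2 b).resolve_left hc.2)
  apply hU.1.1
  simpa [← compl_sup] using hU.1.2.2.2 _ h _ hab

theorem IsBUltrafilter.exists_mem_of_sSup_mem [CompleteBooleanAlgebra B] {U : Set B}
    (hU : IsBUltrafilter U) {F : Set B} (hF : F.Finite) (h : sSup F ∈ U) : ∃ p ∈ F, p ∈ U := by
  induction F, hF using Set.Finite.induction_on with
  | empty => exact absurd (sSup_empty (α := B) ▸ h) hU.1.1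
  | @insert a s _ _ ih =>
    rw [sSup_insert] at h
    rcases hU.mem_or_mem_of_sup_mem h with ha | hs
    · exact ⟨a, Set.mem_insert a s, ha⟩
    · obtain ⟨p, hp, hpU⟩ := ih hs
      exact ⟨p, Set.mem_insert_of_mem a hp, hpU⟩

theorem biSup_compl_of_pairwise_disjoint [CompleteBooleanAlgebra B] {ι : Type*} {p : ι → B}
    (hp : Pairwise (Disjoint on p)) (htop : ⨆ i, p i = ⊤) (s : Set ι) :
    ⨆ i ∈ sᶜ, p i = (⨆ i ∈ s, p i)ᶜ := by
  refine (IsCompl.of_eq ?_ ?_).compl_eq.symm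
  · rw [← biSup_inter_of_pairwise_disjoint hp, Set.inter_compl_self]
    simp
  · rw [← iSup_union, Set.union_compl_self]
    simpa using htop

theorem IsBUltrafilter.isNUltrafilter_trace [CompleteBooleanAlgebra B] {U : Set B}
    (hU : IsBUltrafilter U) {p : ℕ → B} (hp : Pairwise (Disjoint on p)) (htop : ⨆ n, p n = ⊤) :
    IsNUltrafilter {A : Set ℕ | (⨆ n ∈ A, p n) ∈ U} := by
  refine ⟨⟨?_, ?_, ?_, ?_⟩, fun A => ?_⟩
  · simpa using hU.1.1
  · simpa [htop] using hU.1.2.1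
  · exact fun A hA C hAC => hU.1.2.2.1 _ hA _ (biSup_mono hAC)
  · intro A hA C hC
    simpa only [Set.mem_ofPred_eq, biSup_inter_of_pairwise_disjoint hp] using hU.1.2.2.2 _ hA _ hC
  · simpa only [Set.mem_ofPred_eq, biSup_compl_of_pairwise_disjoint hp htop] using hU.2 _

theorem IsSelectiveFamily.exists_injOn_of_nat {V : Set (Set ℕ)} (hV : IsSelectiveFamily V)
    (f : ℕ → ℕ) (hf : ∀ n, f ⁻¹' {n} ∉ V) : ∃ S ∈ V, S.InjOn f := by
  obtain ⟨S, hS, hsub⟩ := hV.2 (fun n => f ⁻¹' {n})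
    (fun m n h => Set.disjoint_iff_inter_eq_empty.1 ((Set.disjoint_singleton.2 h).preimage f))
    (Set.eq_univ_of_forall fun m => Set.mem_iUnion.2 ⟨f m, rfl⟩) hf
  exact ⟨S, hS, fun a ha b hb hab => hsub (f b) ⟨ha, hab⟩ ⟨hb, rfl⟩⟩

theorem IsSelectiveFamily.exists_injOn {α : Type*} {V : Set (Set ℕ)} (hV : IsSelectiveFamily V)
    (f : ℕ → α) (hf : ∀ a, f ⁻¹' {a} ∉ V) : ∃ S ∈ V, S.InjOn f := by
  let g : ℕ → ℕ := fun m => Function.invFun f (f m)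
  have hg : ∀ m, f (g m) = f m := fun m => Function.invFun_eq ⟨m, rfl⟩
  have hfib : ∀ n, g ⁻¹' {n} ⊆ f ⁻¹' {f n} := fun n m (hm : g m = n) => (hm ▸ hg m).symm
  obtain ⟨S, hS, hinj⟩ :=
    hV.exists_injOn_of_nat g fun n hn => hf (f n) (hV.1.1.2.2.1 _ hn _ (hfib n))
  exact ⟨S, hS, fun a ha b hb hab => hinj ha hb (congrArg (Function.invFun f) hab)⟩

theorem Set.exists_injective_range_eq {α : Type*} {s : Set α} (hc : s.Countable)
    (hi : s.Infinite) : ∃ e : ℕ → α, Injective e ∧ Set.range e = s := by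
  obtain ⟨_⟩ := Set.countable_infinite_iff_nonempty_denumerable.1 ⟨hc, hi⟩
  refine ⟨fun n => ((Denumerable.eqv s).symm n : α),
    Subtype.val_injective.comp (Denumerable.eqv s).symm.injective, ?_⟩
  rw [Set.range_comp' Subtype.val, (Denumerable.eqv s).symm.range_eq_univ, Set.image_univ,
    Subtype.range_coe]

theorem exists_selector_of_isSelectiveFamily_trace [CompleteBooleanAlgebra B] {U : Set B}
    (hU : IsBUltrafilter U) {e : ℕ → B} (hsel : IsSelectiveFamily {A : Set ℕ | (⨆ n ∈ A, e n) ∈ U})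
    {Q : Set B} (hQ : IsBPartition Q) (hQU : ∀ q ∈ Q, q ∉ U) (heQ : BRefines (Set.range e) Q) :
    ∃ X ⊆ Set.range e, sSup X ∈ U ∧ ∀ q ∈ Q, {p ∈ X | p ⊓ q ≠ ⊥}.Subsingleton := by
  choose c hcQ hec using fun n => heQ (e n) (Set.mem_range_self n)
  have hfib : ∀ q, c ⁻¹' {q} ∉ {A : Set ℕ | (⨆ n ∈ A, e n) ∈ U} := by
    intro q hq
    obtain ⟨m, hm : c m = q⟩ := Set.nonempty_iff_ne_empty.2 fun h => hsel.1.1.1 (h ▸ hq)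
    exact hQU q (hm ▸ hcQ m) (hU.1.2.2.1 _ hq _ (iSup₂_le fun n (hn : c n = q) => hn ▸ hec n))
  obtain ⟨S, hS, hinj⟩ := hsel.exists_injOn c hfib
  refine ⟨e '' S, Set.image_subset_range e S, by rwa [sSup_image], ?_⟩
  rintro q hq _ ⟨⟨m, hm, rfl⟩, hmq⟩ _ ⟨⟨m', hm', rfl⟩, hm'q⟩
  have hc : ∀ {k}, e k ⊓ q ≠ ⊥ → c k = q :=
    fun hk => hQ.eq_of_le_of_inf_ne_bot hq (hcQ _) (hec _) hk
  rw [hinj hm hm' ((hc hmq).trans (hc hm'q).symm)]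

theorem IsCoherentSelectiveUltrafilter.exists_selector [CompleteBooleanAlgebra B]
    (hcc : BCCC B) {U : Set B} (hcs : IsCoherentSelectiveUltrafilter U) {P Q : Set B}
    (hP : IsBPartition P) (hQ : IsBPartition Q) (hPQ : BRefines P Q) :
    (Q ∩ U).Nonempty ∨ ∃ X ⊆ P, sSup X ∈ U ∧ ∀ q ∈ Q, {p ∈ X | p ⊓ q ≠ ⊥}.Subsingleton := by
  refine or_iff_not_imp_left.2 fun hQU => ?_
  by_cases hPU : (P ∩ U).Nonempty
  · obtain ⟨p, hpP, hpU⟩ := hPU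
    exact ⟨{p}, by simpa, by simpa, fun _ _ => Set.subsingleton_singleton.anti (Set.sep_subset _ _)⟩
  · have hPinf : P.Infinite := fun hfin =>
      hPU (hcs.1.exists_mem_of_sSup_mem hfin (hP.sSup_eq_top ▸ hcs.1.1.2.1))
    obtain ⟨e, he, rfl⟩ := Set.exists_injective_range_eq (hcc P hP.1 hP.2.1) hPinf
    exact exists_selector_of_isSelectiveFamily_trace hcs.1 (hcs.2 e he hP) hQ
      (fun q hq hqU => hQU ⟨q, hq, hqU⟩) hPQ

theorem isSelectiveFamily_trace_of_partition_pairs [CompleteBooleanAlgebra B] {U : Set B}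
    (hU : IsBUltrafilter U)
    (hpair : ∀ P Q : Set B, IsBPartition P → IsBPartition Q → BRefines P Q →
      (Q ∩ U).Nonempty ∨ ∃ X ⊆ P, sSup X ∈ U ∧ ∀ q ∈ Q, {p ∈ X | p ⊓ q ≠ ⊥}.Subsingleton)
    {p : ℕ → B} (hinj : Injective p) (hP : IsBPartition (Set.range p)) :
    IsSelectiveFamily {A : Set ℕ | (⨆ n ∈ A, p n) ∈ U} := by
  have hp := hP.pairwise_disjoint hinj
  refine ⟨hU.isNUltrafilter_trace hp (by rw [← sSup_range]; exact hP.sSup_eq_top),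
    fun A hAdisj hcover hAU => ?_⟩
  have hA : Pairwise (Disjoint on A) :=
    fun m n h => Set.disjoint_iff_inter_eq_empty.2 (hAdisj h)
  rcases hpair _ _ hP (hP.biSup_image hp hA hcover) (bRefines_biSup_image p hcover) with
    ⟨_, ⟨n, -, rfl⟩, hnU⟩ | ⟨X, hXP, hXU, hXQ⟩
  · exact absurd hnU (hAU n)
  · refine ⟨p ⁻¹' X, by rwa [Set.mem_ofPred_eq, ← sSup_image, Set.image_preimage_eq_of_subset hXP],
      fun n m hm m' hm' => hinj ?_⟩
    have hmeet : ∀ k ∈ A n, p k ⊓ ⨆ j ∈ A n, p j ≠ ⊥ := fun k hk => by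
      rw [inf_eq_left.2 (le_biSup p hk)]
      exact hP.ne_bot (Set.mem_range_self k)
    exact hXQ _ ⟨n, ⟨m, hm.2⟩, rfl⟩ ⟨hm.1, hmeet m hm.2⟩ ⟨hm'.1, hmeet m' hm'.2⟩

/-- Characterization of coherent selective ultrafilters via pairs of
partitions. -/
theorem coherentSelective_iff_partition_pairs [CompleteBooleanAlgebra B]
    (hcc : BCCC B) (U : Set B) (hU : IsBUltrafilter U) :
    IsCoherentSelectiveUltrafilter U ↔
      ∀ P Q : Set B, IsBPartition P → IsBPartition Q → BRefines P Q →
        (Q ∩ U).Nonempty ∨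
        ∃ X ⊆ P, sSup X ∈ U ∧ ∀ q ∈ Q, {p ∈ X | p ⊓ q ≠ ⊥}.Subsingleton :=
  ⟨fun hcs _ _ hP hQ hPQ => hcs.exists_selector hcc hP hQ hPQ,
    fun hpair => ⟨hU, fun _ hinj hP => isSelectiveFamily_trace_of_partition_pairs hU hpair hinj hP⟩⟩
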